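/- A vector ξ : S → ℝ ∪ {−∞} is a normalised extremal generator of ℋ if and only if ξ ∈ ℳᵐ. -/

import Mathlib

open Filter Topology

noncomputable section

namespace MaxPlus

variable {S : Type*}

/-- Weight of the path `p 0, p 1, ..., p n` for the kernel `A`. -/
def pathWeight (A : S → S → EReal) (p : ℕ → S) (n : ℕ) : EReal :=
  ∑ k ∈ Finset.range n, A (p k) (p (k + 1))

/-- The max-plus star kernel `A*`: supremum of weights of paths of length `≥ 0`. -/
def star (A : S → S → EReal) (i j : S) : EReal :=
  ⨆ (n : ℕ) (p : ℕ → S) (_ : p 0 = i ∧ p n = j), pathWeight A p n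

/-- The max-plus kernel `A⁺`: supremum of weights of paths of length `≥ 1`. -/
def plus (A : S → S → EReal) (i j : S) : EReal :=
  ⨆ (n : ℕ) (_ : 1 ≤ n) (p : ℕ → S) (_ : p 0 = i ∧ p n = j), pathWeight A p n

/-- `π` is a left super-harmonic row vector (with full support, being real valued). -/
def LeftSuperharmonic (A : S → S → EReal) (π : S → ℝ) : Prop :=
  ∀ j, (⨆ i, ((π i : EReal) + A i j)) ≤ (π j : EReal)

/-- The Martin kernel `K_{ij} = A*_{ij} - π_j`. -/
def K (A : S → S → EReal) (π : S → ℝ) (i j : S) : EReal :=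
  star A i j - (π j : EReal)

/-- `K♭_{ij} = A⁺_{ij} - π_j`. -/
def Kflat (A : S → S → EReal) (π : S → ℝ) (i j : S) : EReal :=
  plus A i j - (π j : EReal)

/-- The set `𝒦` of columns of the Martin kernel. -/
def kerCols (A : S → S → EReal) (π : S → ℝ) : Set (S → EReal) :=
  Set.range fun j => fun i => K A π i j

/-- The Martin space `ℳ`: closure of `𝒦` in the product topology. -/
def martin (A : S → S → EReal) (π : S → ℝ) : Set (S → EReal) :=
  closure (kerCols A π)

/-- `μ_u(w)`: the limsup of `π_j + u_j` as `K_{·j} → w`. -/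
def mu (A : S → S → EReal) (π : S → ℝ) (u : S → EReal) (w : S → EReal) : EReal :=
  ⨅ (W : Set (S → EReal)) (_ : W ∈ 𝓝 w),
    ⨆ (j : S) (_ : (fun i => K A π i j) ∈ W), ((π j : EReal) + u j)

/-- `w♭_i`: the liminf of `K♭_{ij}` as `K_{·j} → w`. -/
def flat (A : S → S → EReal) (π : S → ℝ) (w : S → EReal) (i : S) : EReal :=
  ⨆ (W : Set (S → EReal)) (_ : W ∈ 𝓝 w),
    ⨅ (j : S) (_ : (fun i' => K A π i' j) ∈ W), Kflat A π i j

/-- The kernel `H(z,w) = μ_w(z)`. -/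
def H (A : S → S → EReal) (π : S → ℝ) (z w : S → EReal) : EReal := mu A π w z

/-- The kernel `H♭(z,w) = μ_{w♭}(z)`. -/
def Hflat (A : S → S → EReal) (π : S → ℝ) (z w : S → EReal) : EReal :=
  mu A π (flat A π w) z

/-- The minimal Martin space `ℳᵐ = {w ∈ ℳ : H♭(w,w) = 0}`. -/
def martinMin (A : S → S → EReal) (π : S → ℝ) : Set (S → EReal) :=
  {w | w ∈ martin A π ∧ Hflat A π w w = 0}

/-- The maximal circuit mean `ρ(A)`. -/
def maxCircuitMean (A : S → S → EReal) : EReal :=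
  ⨆ (k : ℕ) (_ : 1 ≤ k) (p : ℕ → S) (_ : p k = p 0),
    (((k : ℝ)⁻¹ : ℝ) : EReal) * pathWeight A p k

/-- `α`-almost-geodesic with respect to the left super-harmonic vector `π`. -/
def IsAlmostGeodesic (A : S → S → EReal) (π : S → ℝ) (x : ℕ → S) : Prop :=
  ∃ α : ℝ, 0 ≤ α ∧ ∀ k : ℕ,
    (π (x k) : EReal) ≤ (α : EReal) + (π (x 0) : EReal) + pathWeight A x k

/-- The set `𝒮` of `π`-integrable super-harmonic vectors. -/
def Sset (A : S → S → EReal) (π : S → ℝ) : Set (S → EReal) :=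
  {u | (∀ i, u i ≠ ⊤) ∧ (∀ i, (⨆ j, A i j + u j) ≤ u i) ∧
    (⨆ j, ((π j : EReal) + u j)) < ⊤}

/-- The set `ℋ` of `π`-integrable harmonic vectors. -/
def Hset (A : S → S → EReal) (π : S → ℝ) : Set (S → EReal) :=
  {u | (∀ i, u i ≠ ⊤) ∧ (∀ i, (⨆ j, A i j + u j) = u i) ∧
    (⨆ j, ((π j : EReal) + u j)) < ⊤}

/-- A vector is normalised if `sup_j (π_j + u_j) = 0`. -/
def Normalised (π : S → ℝ) (u : S → EReal) : Prop :=
  (⨆ j, ((π j : EReal) + u j)) = 0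

/-- `ξ` is an extremal generator of `V`. -/
def ExtremalGen (V : Set (S → EReal)) (ξ : S → EReal) : Prop :=
  ξ ∈ V ∧ ξ ≠ (fun _ => (⊥ : EReal)) ∧
    ∀ u v, u ∈ V → v ∈ V → ξ = (fun i => u i ⊔ v i) → ξ = u ∨ ξ = v

end MaxPlus

/-!
On the minimal Martin space one has `w♭ = w`: the inequality `w ≤ w♭` comes from
`H♭(w, w) = 0` together with the super-harmonicity of `w♭`. Hence `w` is harmonic with
`μ_w(w) = 0`. Since `μ_{u ⊔ v} = μ_u ⊔ μ_v` and `μ_u(w) + w ≤ u` for super-harmonic `u`, a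
decomposition `w = u ⊔ v` forces `w = u` or `w = v`.

Conversely, following an almost optimal path of a harmonic `ξ` gives an almost-geodesic, and
along an almost-geodesic `x` the columns `K_{·x_k}` converge to a point of `ℳᵐ`. This yields the
Martin representation `ξ = ⨆_{w ∈ ℳᵐ} (μ_ξ(w) + w)`. When `ξ` is extremal, a sub-family of this
representation that misses a closed condition cannot generate `ξ`, so by compactness of `ℳ` some
`y ∈ ℳ` satisfies all of them: `ξ ≤ y` and `μ_ξ(y) ≥ 0`, which forces `y = ξ`.
-/

namespace EReal

theorem add_iSup {ι : Sort*} (a : EReal) (f : ι → EReal) : a + ⨆ i, f i = ⨆ i, a + f i := by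
  refine le_antisymm ?_ (iSup_le fun i => add_le_add le_rfl (le_iSup f i))
  refine add_le_of_forall_lt fun a' ha' b hb => ?_
  obtain ⟨i, hi⟩ := lt_iSup_iff.1 hb
  exact (add_le_add ha'.le hi.le).trans (le_iSup (fun i => a + f i) i)

theorem iSup_add {ι : Sort*} (f : ι → EReal) (a : EReal) :
    (⨆ i, f i) + a = ⨆ i, f i + a := by
  simpa only [add_comm] using add_iSup a f

theorem add_le_of_forall_coe_lt {a b c : EReal} (h : ∀ r : ℝ, (r : EReal) < b → a + r ≤ c) :
    a + b ≤ c := by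
  refine add_le_of_forall_lt fun a' ha' b' hb' => ?_
  obtain ⟨z, hbz, hzb⟩ := exists_between hb'
  induction z using EReal.rec with
  | bot => exact absurd hbz not_lt_bot
  | top => exact absurd hzb not_top_lt
  | coe r => exact (add_le_add ha'.le hbz.le).trans (h r hzb)

end EReal

theorem Filter.le_liminf_const {α β : Type*} [CompleteLattice β] (F : Filter α) (b : β) :
    b ≤ liminf (fun _ => b) F :=
  le_liminf_of_le (by isBoundedDefault) (Eventually.of_forall fun _ => le_rfl)

section JoinIrreducible

variable {α T : Type*} [CompleteLattice α] {V : Set α} {ξ : α}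

theorem iSup_biInter_eq_of_join_irreducible {ι : Type*}
    (hext : ∀ u ∈ V, ∀ v ∈ V, ξ = u ⊔ v → ξ = u ∨ ξ = v) {f : T → α}
    (hV : ∀ P : Set T, (⨆ t ∈ P, f t) ∈ V) (hf : (⨆ t, f t) = ξ)
    {P : ι → Set T} (hP : ∀ l, (⨆ t ∈ (P l)ᶜ, f t) ≠ ξ) (F : Finset ι) :
    (⨆ t ∈ ⋂ l ∈ F, P l, f t) = ξ := by
  classical
  induction F using Finset.induction_on with
  | empty => simpa using hf
  | insert l F _ ih =>
    set G := ⋂ l ∈ F, P l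
    have hsplit : ξ = (⨆ t ∈ G ∩ P l, f t) ⊔ ⨆ t ∈ G \ P l, f t := by
      rw [← iSup_union, Set.inter_union_sdiff, ih]
    rw [Finset.set_biInter_insert, Set.inter_comm]
    refine ((hext _ (hV _) _ (hV _) hsplit).resolve_right fun h => hP l ?_).symm
    refine le_antisymm (hf ▸ iSup₂_le fun t _ => le_iSup f t) ?_
    exact h.le.trans (biSup_mono fun t ht => ht.2)

theorem IsCompact.exists_mem_of_join_irreducible {X : Type*} [TopologicalSpace X] {K : Set X}
    (hK : IsCompact K) (hξ : ξ ≠ ⊥)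
    (hext : ∀ u ∈ V, ∀ v ∈ V, ξ = u ⊔ v → ξ = u ∨ ξ = v)
    {f : T → α} (hV : ∀ P : Set T, (⨆ t ∈ P, f t) ∈ V) (hf : (⨆ t, f t) = ξ)
    (x : T → X) (hx : ∀ t, x t ∈ K) :
    ∃ y ∈ K, ∀ C : Set X, IsClosed C → (⨆ t ∈ (x ⁻¹' C)ᶜ, f t) ≠ ξ → y ∈ C := by
  let ι := {C : Set X // IsClosed C ∧ (⨆ t ∈ (x ⁻¹' C)ᶜ, f t) ≠ ξ}
  obtain ⟨y, hyK, hy⟩ :=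
      hK.inter_iInter_nonempty (fun C : ι => C.1) (fun C => C.2.1) fun F => by
    have h := iSup_biInter_eq_of_join_irreducible hext hV hf
      (P := fun C : ι => x ⁻¹' C.1) (fun C => C.2.2) F
    obtain ⟨t, ht⟩ : (⋂ C ∈ F, x ⁻¹' C.1).Nonempty :=
      Set.nonempty_iff_ne_empty.2 fun he => hξ (by rw [← h, he]; simp)
    exact ⟨x t, hx t, Set.mem_iInter₂.2 fun C hC => Set.mem_iInter₂.1 ht C hC⟩
  exact ⟨y, hyK, fun C hC hCξ => Set.mem_iInter.1 hy ⟨C, hC, hCξ⟩⟩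

end JoinIrreducible

namespace MaxPlus

open Filter Topology

variable {S : Type*} {A : S → S → EReal} {π : S → ℝ} {x : ℕ → S}

lemma pathWeight_zero (p : ℕ → S) : pathWeight A p 0 = 0 := Finset.sum_range_zero _

lemma pathWeight_succ (p : ℕ → S) (n : ℕ) :
    pathWeight A p (n + 1) = pathWeight A p n + A (p n) (p (n + 1)) :=
  Finset.sum_range_succ _ _

lemma pathWeight_le_star (p : ℕ → S) (n : ℕ) : pathWeight A p n ≤ star A (p 0) (p n) :=
  le_iSup₂_of_le n p <| le_iSup_of_le ⟨rfl, rfl⟩ le_rfl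

lemma pathWeight_le_plus (p : ℕ → S) {n : ℕ} (hn : 1 ≤ n) :
    pathWeight A p n ≤ plus A (p 0) (p n) :=
  le_iSup₂_of_le n hn <| le_iSup₂_of_le p ⟨rfl, rfl⟩ le_rfl

lemma lt_star_iff {i j : S} {c : EReal} :
    c < star A i j ↔ ∃ n p, p 0 = i ∧ p n = j ∧ c < pathWeight A p n := by
  simp only [star, lt_iSup_iff, exists_prop, and_assoc]

lemma lt_plus_iff {i j : S} {c : EReal} :
    c < plus A i j ↔ ∃ n, 1 ≤ n ∧ ∃ p, p 0 = i ∧ p n = j ∧ c < pathWeight A p n := by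
  simp only [plus, lt_iSup_iff, exists_prop, and_assoc]

lemma zero_le_star_self (i : S) : 0 ≤ star A i i := by
  simpa [pathWeight_zero] using pathWeight_le_star (A := A) (fun _ => i) 0

lemma plus_le_star (i j : S) : plus A i j ≤ star A i j :=
  iSup_mono fun _ => iSup_const_le

lemma le_plus (i j : S) : A i j ≤ plus A i j := by
  simpa [pathWeight] using pathWeight_le_plus (A := A) (fun t => if t = 0 then i else j) le_rfl

lemma exists_pathWeight_append {p q : ℕ → S} {n : ℕ} (h : p n = q 0) (m : ℕ) :
    ∃ r : ℕ → S, r 0 = p 0 ∧ r (n + m) = q m ∧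
      pathWeight A r (n + m) = pathWeight A p n + pathWeight A q m := by
  have hr : ∀ k, (if n + k ≤ n then p (n + k) else q (n + k - n)) = q k := by
    intro k
    rcases Nat.eq_zero_or_pos k with rfl | hk
    · simpa using h
    · simp [show ¬ n + k ≤ n by omega]
  refine ⟨fun t => if t ≤ n then p t else q (t - n), by simp, hr m, ?_⟩
  simp only [pathWeight]
  rw [Finset.sum_range_add]
  congr 1
  · refine Finset.sum_congr rfl fun t ht => ?_
    have := Finset.mem_range.1 ht
    simp [show t ≤ n by omega, show t + 1 ≤ n by omega]
  · refine Finset.sum_congr rfl fun t _ => ?_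
    rw [hr, add_assoc, hr]

lemma star_add_plus_le (i k j : S) : star A i k + plus A k j ≤ plus A i j := by
  refine EReal.add_le_of_forall_lt fun a ha b hb => ?_
  obtain ⟨n, p, rfl, hpk, hpa⟩ := lt_star_iff.1 ha
  obtain ⟨m, hm, q, hq0, rfl, hqb⟩ := lt_plus_iff.1 hb
  obtain ⟨r, hr0, hrm, hr⟩ := exists_pathWeight_append (A := A) (hpk.trans hq0.symm) m
  calc a + b ≤ pathWeight A r (n + m) := hr ▸ add_le_add hpa.le hqb.le
    _ ≤ plus A (p 0) (q m) := hr0 ▸ hrm ▸ pathWeight_le_plus r (by omega)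

lemma plus_add_star_le (i k j : S) : plus A i k + star A k j ≤ plus A i j := by
  refine EReal.add_le_of_forall_lt fun a ha b hb => ?_
  obtain ⟨n, hn, p, rfl, hpk, hpa⟩ := lt_plus_iff.1 ha
  obtain ⟨m, q, hq0, rfl, hqb⟩ := lt_star_iff.1 hb
  obtain ⟨r, hr0, hrm, hr⟩ := exists_pathWeight_append (A := A) (hpk.trans hq0.symm) m
  calc a + b ≤ pathWeight A r (n + m) := hr ▸ add_le_add hpa.le hqb.le
    _ ≤ plus A (p 0) (q m) := hr0 ▸ hrm ▸ pathWeight_le_plus r (by omega)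

lemma add_star_le_plus (i k j : S) : A i k + star A k j ≤ plus A i j :=
  (add_le_add (le_plus i k) le_rfl).trans (plus_add_star_le i k j)

lemma star_add_le_star (i k j : S) : star A i k + A k j ≤ star A i j :=
  ((add_le_add le_rfl (le_plus k j)).trans (star_add_plus_le i k j)).trans (plus_le_star i j)

lemma plus_le_iSup_add_star (i j : S) : plus A i j ≤ ⨆ k, A i k + star A k j := by
  refine iSup_le fun n => iSup_le fun hn => iSup_le fun p => iSup_le fun ⟨hp0, hpn⟩ => ?_
  obtain ⟨n, rfl⟩ := Nat.exists_eq_add_of_le' hn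
  have hshift : pathWeight A p (n + 1) = A (p 0) (p 1) + pathWeight A (fun t => p (t + 1)) n := by
    simp only [pathWeight]
    rw [Finset.sum_range_succ', add_comm]
  rw [hshift, ← hp0]
  exact le_iSup_of_le (p 1) (add_le_add le_rfl (hpn ▸ pathWeight_le_star (fun t => p (t + 1)) n))

def IsSuperharmonic (A : S → S → EReal) (u : S → EReal) : Prop :=
  ∀ i j, A i j + u j ≤ u i

def IsHarmonic (A : S → S → EReal) (u : S → EReal) : Prop :=
  ∀ i, (⨆ j, A i j + u j) = u i

lemma IsHarmonic.isSuperharmonic {u : S → EReal} (hu : IsHarmonic A u) : IsSuperharmonic A u :=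
  fun i j => (le_iSup (fun j => A i j + u j) j).trans (hu i).le

lemma IsSuperharmonic.pathWeight_add_le {u : S → EReal} (hu : IsSuperharmonic A u)
    (p : ℕ → S) (n : ℕ) : pathWeight A p n + u (p n) ≤ u (p 0) := by
  induction n with
  | zero => simp [pathWeight_zero]
  | succ n ih =>
    calc pathWeight A p (n + 1) + u (p (n + 1))
        = pathWeight A p n + (A (p n) (p (n + 1)) + u (p (n + 1))) := by
          rw [pathWeight_succ, add_assoc]
      _ ≤ pathWeight A p n + u (p n) := add_le_add le_rfl (hu _ _)
      _ ≤ u (p 0) := ih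

lemma IsSuperharmonic.star_add_le {u : S → EReal} (hu : IsSuperharmonic A u) (i j : S) :
    star A i j + u j ≤ u i := by
  refine EReal.add_le_of_forall_lt fun a ha b hb => ?_
  obtain ⟨n, p, rfl, rfl, hpa⟩ := lt_star_iff.1 ha
  exact (add_le_add hpa.le hb.le).trans (hu.pathWeight_add_le p n)

lemma IsHarmonic.const_add {u : S → EReal} (hu : IsHarmonic A u) (c : EReal) :
    IsHarmonic A fun i => c + u i := by
  intro i
  simp_rw [add_left_comm _ c, ← EReal.add_iSup, hu i]

lemma IsHarmonic.iSup {ι : Sort*} {u : ι → S → EReal} (hu : ∀ t, IsHarmonic A (u t)) :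
    IsHarmonic A (⨆ t, u t) := by
  intro i
  simp_rw [iSup_apply, EReal.add_iSup]
  rw [iSup_comm]
  exact iSup_congr fun t => hu t i

lemma isHarmonic_of_mem_Hset {u : S → EReal} (hu : u ∈ Hset A π) : IsHarmonic A u := hu.2.1

lemma mem_Hset_of_le {u ξ : S → EReal} (hu : IsHarmonic A u) (hξ : ξ ∈ Hset A π)
    (hle : u ≤ ξ) : u ∈ Hset A π :=
  ⟨fun i => ne_top_of_le_ne_top (hξ.1 i) (hle i), hu,
    (iSup_mono fun j => add_le_add le_rfl (hle j)).trans_lt hξ.2.2⟩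

lemma LeftSuperharmonic.add_le (hπ : LeftSuperharmonic A π) (i j : S) :
    (π i : EReal) + A i j ≤ π j :=
  (le_iSup (fun i => (π i : EReal) + A i j) i).trans (hπ j)

lemma LeftSuperharmonic.add_pathWeight_le (hπ : LeftSuperharmonic A π) (p : ℕ → S) (n : ℕ) :
    (π (p 0) : EReal) + pathWeight A p n ≤ π (p n) := by
  induction n with
  | zero => simp [pathWeight_zero]
  | succ n ih =>
    calc (π (p 0) : EReal) + pathWeight A p (n + 1)
        = (π (p 0) + pathWeight A p n) + A (p n) (p (n + 1)) := by
          rw [pathWeight_succ, add_assoc]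
      _ ≤ π (p n) + A (p n) (p (n + 1)) := add_le_add ih le_rfl
      _ ≤ π (p (n + 1)) := hπ.add_le _ _

lemma LeftSuperharmonic.add_star_le (hπ : LeftSuperharmonic A π) (i j : S) :
    (π i : EReal) + star A i j ≤ π j := by
  refine EReal.add_le_of_forall_lt fun a ha b hb => ?_
  obtain ⟨n, p, rfl, rfl, hpb⟩ := lt_star_iff.1 hb
  exact (add_le_add ha.le hpb.le).trans (hπ.add_pathWeight_le p n)

lemma K_add_pi (i j : S) : K A π i j + π j = star A i j := EReal.sub_add_cancel

lemma Kflat_add_pi (i j : S) : Kflat A π i j + π j = plus A i j := EReal.sub_add_cancel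

lemma Kflat_le_K (i j : S) : Kflat A π i j ≤ K A π i j :=
  EReal.sub_le_sub (plus_le_star i j) le_rfl

lemma LeftSuperharmonic.K_le (hπ : LeftSuperharmonic A π) (i j : S) :
    K A π i j ≤ -(π i : EReal) := by
  have h := hπ.add_star_le i j
  refine EReal.sub_le_of_le_add ?_
  generalize star A i j = s at h ⊢
  induction s using EReal.rec with
  | bot => exact bot_le
  | top => simp at h
  | coe r => norm_cast at h ⊢; linarith

lemma isSuperharmonic_K (j : S) : IsSuperharmonic A fun i => K A π i j := by
  intro i k
  simp only [K, sub_eq_add_neg, ← add_assoc]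
  exact add_le_add ((add_star_le_plus i k j).trans (plus_le_star i j)) le_rfl

lemma add_K_le_Kflat (i k j : S) : A i k + K A π k j ≤ Kflat A π i j := by
  simp only [K, Kflat, sub_eq_add_neg, ← add_assoc]
  exact add_le_add (add_star_le_plus i k j) le_rfl

lemma add_Kflat_le_Kflat (i k j : S) : A i k + Kflat A π k j ≤ Kflat A π i j := by
  simp only [Kflat, sub_eq_add_neg, ← add_assoc]
  exact add_le_add ((add_le_add le_rfl (plus_le_star k j)).trans (add_star_le_plus i k j)) le_rfl

def martinFilter (A : S → S → EReal) (π : S → ℝ) (w : S → EReal) : Filter S :=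
  comap (fun j i => K A π i j) (𝓝 w)

lemma mu_eq_limsup (u w : S → EReal) :
    mu A π u w = limsup (fun j => (π j : EReal) + u j) (martinFilter A π w) := by
  rw [martinFilter, ((𝓝 w).basis_sets.comap _).limsup_eq_iInf_iSup]
  rfl

lemma flat_eq_liminf (w : S → EReal) (i : S) :
    flat A π w i = liminf (fun j => Kflat A π i j) (martinFilter A π w) := by
  rw [martinFilter, ((𝓝 w).basis_sets.comap _).liminf_eq_iSup_iInf]
  rfl

lemma tendsto_K_martinFilter (w : S → EReal) (i : S) :
    Tendsto (fun j => K A π i j) (martinFilter A π w) (𝓝 (w i)) :=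
  ((continuous_apply i).tendsto w).comp tendsto_comap

lemma tendsto_martinFilter_iff {ι : Type*} {l : Filter ι} {x : ι → S} {w : S → EReal} :
    Tendsto x l (martinFilter A π w) ↔ Tendsto (fun k i => K A π i (x k)) l (𝓝 w) :=
  tendsto_comap_iff

lemma martinFilter_neBot {w : S → EReal} (hw : w ∈ martin A π) :
    (martinFilter A π w).NeBot := by
  refine comap_neBot fun t ht => ?_
  obtain ⟨_, hv, j, rfl⟩ := mem_closure_iff_nhds.1 hw t ht
  exact ⟨j, hv⟩

lemma le_liminf_K (w : S → EReal) (i : S) :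
    w i ≤ liminf (fun j => K A π i j) (martinFilter A π w) := by
  refine EReal.ge_of_forall_gt_iff_ge.1 fun r hr => le_liminf_of_le (by isBoundedDefault) ?_
  exact ((tendsto_K_martinFilter w i).eventually (lt_mem_nhds hr)).mono fun j hj => hj.le

lemma isCompact_martin : IsCompact (martin A π) := isClosed_closure.isCompact

lemma isClosed_setOf_isSuperharmonic : IsClosed {u : S → EReal | IsSuperharmonic A u} := by
  have : {u : S → EReal | IsSuperharmonic A u} =
      ⋂ (i) (j) (r : ℝ), {u | u j ≤ (r : EReal)} ∪ {u | A i j + r ≤ u i} := by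
    ext u
    simp only [Set.mem_ofPred_eq, Set.mem_iInter, Set.mem_union, IsSuperharmonic]
    refine forall₂_congr fun i j => ⟨fun h r => ?_, fun h => ?_⟩
    · exact (le_or_gt (u j) r).imp_right fun hr => (add_le_add le_rfl hr.le).trans (h)
    · exact EReal.add_le_of_forall_coe_lt fun r hr => (h r).resolve_left hr.not_ge
  rw [this]
  exact isClosed_iInter fun i => isClosed_iInter fun j => isClosed_iInter fun r =>
    (isClosed_le (continuous_apply j) continuous_const).union
      (isClosed_le continuous_const (continuous_apply i))

lemma isSuperharmonic_of_mem_martin {w : S → EReal} (hw : w ∈ martin A π) :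
    IsSuperharmonic A w :=
  closure_minimal (Set.range_subset_iff.2 isSuperharmonic_K) isClosed_setOf_isSuperharmonic hw

lemma LeftSuperharmonic.le_neg_of_mem_martin (hπ : LeftSuperharmonic A π) {w : S → EReal}
    (hw : w ∈ martin A π) (i : S) : w i ≤ -(π i : EReal) :=
  closure_minimal (t := {w : S → EReal | w i ≤ -(π i : EReal)})
    (Set.range_subset_iff.2 fun j => hπ.K_le i j)
    (isClosed_le (continuous_apply i) continuous_const) hw

lemma LeftSuperharmonic.add_le_zero_of_mem_martin (hπ : LeftSuperharmonic A π)
    {w : S → EReal} (hw : w ∈ martin A π) (i : S) : (π i : EReal) + w i ≤ 0 :=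
  (add_le_add le_rfl (hπ.le_neg_of_mem_martin hw i)).trans_eq <| by
    rw [← EReal.coe_neg, ← EReal.coe_add, add_neg_cancel, EReal.coe_zero]

lemma mu_le_iSup (u w : S → EReal) : mu A π u w ≤ ⨆ j, (π j : EReal) + u j :=
  (mu_eq_limsup u w).trans_le limsup_le_iSup

lemma mu_mono {u v : S → EReal} (h : u ≤ v) (w : S → EReal) :
    mu A π u w ≤ mu A π v w := by
  simp only [mu_eq_limsup]
  exact limsup_le_limsup (Eventually.of_forall fun j => add_le_add le_rfl (h j))

lemma mu_sup (u v w : S → EReal) : mu A π (u ⊔ v) w = mu A π u w ⊔ mu A π v w := by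
  simp only [mu_eq_limsup, Pi.sup_apply]
  simp_rw [← max_add_add_left]
  exact limsup_max

lemma IsSuperharmonic.mu_add_le {u : S → EReal} (hu : IsSuperharmonic A u) (w : S → EReal)
    (i : S) : mu A π u w + w i ≤ u i := by
  rw [mu_eq_limsup]
  calc _ ≤ limsup (fun j => (π j : EReal) + u j) (martinFilter A π w)
        + liminf (fun j => K A π i j) (martinFilter A π w) := add_le_add le_rfl (le_liminf_K w i)
    _ ≤ limsup (fun j => ((π j : EReal) + u j) + K A π i j) (martinFilter A π w) :=
        EReal.le_limsup_add
    _ ≤ ⨆ j, ((π j : EReal) + u j) + K A π i j := limsup_le_iSup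
    _ ≤ u i := iSup_le fun j => by
        rw [add_comm, ← add_assoc, K_add_pi]
        exact hu.star_add_le i j

lemma IsSuperharmonic.le_of_mu_nonneg {u w : S → EReal} (hu : IsSuperharmonic A u)
    (h : 0 ≤ mu A π u w) : w ≤ u := fun i => by
  simpa using (add_le_add h le_rfl).trans (hu.mu_add_le w i)

lemma LeftSuperharmonic.limsup_K_add_le (hπ : LeftSuperharmonic A π) {w : S → EReal}
    (hw : w ∈ martin A π) {u : S → EReal} (hu : (⨆ j, (π j : EReal) + u j) ≠ ⊤)
    (i : S) :
    limsup (fun j => K A π i j + ((π j : EReal) + u j)) (martinFilter A π w)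
      ≤ w i + mu A π u w := by
  have := martinFilter_neBot hw
  have hK := (tendsto_K_martinFilter (A := A) (π := π) w i).limsup_eq
  rw [mu_eq_limsup, ← hK]
  refine EReal.limsup_add_le (.inr (ne_top_of_le_ne_top hu limsup_le_iSup)) (.inl ?_)
  rw [hK]
  exact ne_top_of_le_ne_top (by simp) (hπ.le_neg_of_mem_martin hw i)

lemma isClosed_setOf_le_mu (u : S → EReal) (c : EReal) :
    IsClosed {w | c ≤ mu A π u w} := by
  rw [← isOpen_compl_iff, isOpen_iff_mem_nhds]
  intro w hw
  obtain ⟨W, hW, hlt⟩ :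
      ∃ W ∈ 𝓝 w, (⨆ (j) (_ : (fun i => K A π i j) ∈ W), (π j : EReal) + u j) < c := by
    simpa [mu, iInf_lt_iff] using hw
  obtain ⟨O, hOW, hO, hwO⟩ := mem_nhds_iff.1 hW
  filter_upwards [hO.mem_nhds hwO] with w' hw'
  have : mu A π u w' < c := (iInf₂_le W (mem_nhds_iff.2 ⟨O, hOW, hO, hw'⟩)).trans_lt hlt
  exact not_le.2 this

lemma flat_le_self {w : S → EReal} (hw : w ∈ martin A π) (i : S) : flat A π w i ≤ w i := by
  have := martinFilter_neBot hw
  rw [flat_eq_liminf, ← (tendsto_K_martinFilter (A := A) (π := π) w i).liminf_eq]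
  exact liminf_le_liminf (Eventually.of_forall fun j => Kflat_le_K i j)

lemma isSuperharmonic_flat (w : S → EReal) : IsSuperharmonic A (flat A π w) := by
  intro i k
  simp only [flat_eq_liminf]
  calc _ ≤ liminf (fun _ => A i k) (martinFilter A π w)
        + liminf (fun j => Kflat A π k j) (martinFilter A π w) :=
        add_le_add (Filter.le_liminf_const _ _) le_rfl
    _ ≤ liminf (fun j => A i k + Kflat A π k j) (martinFilter A π w) := EReal.le_liminf_add
    _ ≤ _ := liminf_le_liminf (Eventually.of_forall fun j => add_Kflat_le_Kflat i k j)

lemma add_le_flat (w : S → EReal) (i k : S) : A i k + w k ≤ flat A π w i := by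
  rw [flat_eq_liminf]
  calc _ ≤ liminf (fun _ => A i k) (martinFilter A π w)
        + liminf (fun j => K A π k j) (martinFilter A π w) :=
        add_le_add (Filter.le_liminf_const _ _) (le_liminf_K w k)
    _ ≤ liminf (fun j => A i k + K A π k j) (martinFilter A π w) := EReal.le_liminf_add
    _ ≤ _ := liminf_le_liminf (Eventually.of_forall fun j => add_K_le_Kflat i k j)

lemma IsHarmonic.flat_eq {w : S → EReal} (hu : IsHarmonic A w) (hw : w ∈ martin A π) :
    flat A π w = w :=
  funext fun i => le_antisymm (flat_le_self hw i)
    ((hu i).symm.le.trans (iSup_le fun k => add_le_flat w i k))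

lemma LeftSuperharmonic.Hflat_self_le_zero (hπ : LeftSuperharmonic A π) {w : S → EReal}
    (hw : w ∈ martin A π) : Hflat A π w w ≤ 0 :=
  (mu_mono (flat_le_self hw) w).trans
    ((mu_le_iSup w w).trans (iSup_le (hπ.add_le_zero_of_mem_martin hw)))

lemma flat_le_iSup_add_flat {w : S → EReal} (hH : Hflat A π w w = 0) (i : S) :
    flat A π w i ≤ ⨆ k, A i k + flat A π w k := by
  have hsh := isSuperharmonic_flat (A := A) (π := π) w
  calc flat A π w i = Hflat A π w w + flat A π w i := by rw [hH, zero_add]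
    _ = limsup (fun j => (π j : EReal) + flat A π w j) (martinFilter A π w)
        + liminf (fun j => Kflat A π i j) (martinFilter A π w) := by
        rw [Hflat, mu_eq_limsup, flat_eq_liminf w i]
    _ ≤ limsup (fun j => ((π j : EReal) + flat A π w j) + Kflat A π i j)
          (martinFilter A π w) :=
        EReal.le_limsup_add
    _ ≤ ⨆ j, ((π j : EReal) + flat A π w j) + Kflat A π i j := limsup_le_iSup
    _ ≤ ⨆ k, A i k + flat A π w k := iSup_le fun j => by
        rw [add_comm, ← add_assoc, Kflat_add_pi]
        refine (add_le_add (plus_le_iSup_add_star i j) le_rfl).trans ?_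
        rw [EReal.iSup_add]
        exact iSup_mono fun k => by rw [add_assoc]; exact add_le_add le_rfl (hsh.star_add_le k j)

lemma self_le_flat_of_Hflat_eq_zero {w : S → EReal} (hH : Hflat A π w w = 0) (i : S) :
    w i ≤ flat A π w i := by
  have := (isSuperharmonic_flat (A := A) (π := π) w).mu_add_le (π := π) w i
  rwa [← Hflat, hH, zero_add] at this

lemma flat_eq_self_of_mem_martinMin {w : S → EReal} (hw : w ∈ martinMin A π) :
    flat A π w = w :=
  funext fun i => le_antisymm (flat_le_self hw.1 i) (self_le_flat_of_Hflat_eq_zero hw.2 i)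

lemma isHarmonic_of_mem_martinMin {w : S → EReal} (hw : w ∈ martinMin A π) : IsHarmonic A w :=
  fun i => le_antisymm (iSup_le (isSuperharmonic_of_mem_martin hw.1 i)) <| by
    simpa only [flat_eq_self_of_mem_martinMin hw] using flat_le_iSup_add_flat hw.2 i

lemma mu_self_of_mem_martinMin {w : S → EReal} (hw : w ∈ martinMin A π) : mu A π w w = 0 := by
  rw [← hw.2, Hflat, flat_eq_self_of_mem_martinMin hw]

lemma LeftSuperharmonic.mem_Hset_of_mem_martinMin (hπ : LeftSuperharmonic A π)
    {w : S → EReal} (hw : w ∈ martinMin A π) : w ∈ Hset A π :=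
  ⟨fun i => ne_top_of_le_ne_top (by simp) (hπ.le_neg_of_mem_martin hw.1 i),
    isHarmonic_of_mem_martinMin hw,
    (iSup_le (hπ.add_le_zero_of_mem_martin hw.1)).trans_lt EReal.zero_lt_top⟩

lemma LeftSuperharmonic.normalised_of_mem_martinMin (hπ : LeftSuperharmonic A π)
    {w : S → EReal} (hw : w ∈ martinMin A π) : Normalised π w :=
  le_antisymm (iSup_le (hπ.add_le_zero_of_mem_martin hw.1))
    ((mu_self_of_mem_martinMin hw).symm.le.trans (mu_le_iSup w w))

lemma eq_of_le_of_mu_eq_zero {u w : S → EReal} (hu : u ∈ Hset A π) (hle : u ≤ w)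
    (h : mu A π u w = 0) : w = u :=
  le_antisymm ((isHarmonic_of_mem_Hset hu).isSuperharmonic.le_of_mu_nonneg h.ge) hle

lemma LeftSuperharmonic.extremalGen_of_mem_martinMin (hπ : LeftSuperharmonic A π)
    {w : S → EReal} (hw : w ∈ martinMin A π) : ExtremalGen (Hset A π) w := by
  refine ⟨hπ.mem_Hset_of_mem_martinMin hw, fun hbot => ?_, fun u v hu hv huv => ?_⟩
  · have := hπ.normalised_of_mem_martinMin hw
    simp [Normalised, hbot] at this
  · change w = u ⊔ v at huv
    have h0 : mu A π u w ⊔ mu A π v w = 0 := by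
      rw [← mu_sup, ← huv, mu_self_of_mem_martinMin hw]
    rcases max_choice (mu A π u w) (mu A π v w) with h | h
    · exact .inl (eq_of_le_of_mu_eq_zero hu (huv ▸ le_sup_left) (h ▸ h0))
    · exact .inr (eq_of_le_of_mu_eq_zero hv (huv ▸ le_sup_right) (h ▸ h0))

lemma IsHarmonic.exists_le_add {ξ : S → EReal} (hξ : IsHarmonic A ξ) {i : S}
    (hbot : ξ i ≠ ⊥) (htop : ξ i ≠ ⊤) {δ : ℝ} (hδ : 0 < δ) : ∃ j, ξ i ≤ A i j + ξ j + δ := by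
  obtain ⟨r, hr⟩ : ∃ r : ℝ, ξ i = r := ⟨_, (EReal.coe_toReal htop hbot).symm⟩
  have h : ((r - δ : ℝ) : EReal) < ⨆ j, A i j + ξ j := by
    rw [hξ i, hr]
    exact_mod_cast sub_lt_self r hδ
  obtain ⟨j, hj⟩ := lt_iSup_iff.1 h
  refine ⟨j, ?_⟩
  calc ξ i = ((r - δ : ℝ) : EReal) + δ := by rw [hr, ← EReal.coe_add, sub_add_cancel]
    _ ≤ A i j + ξ j + δ := add_le_add hj.le le_rfl

lemma IsHarmonic.exists_path {ξ : S → EReal} (hξ : IsHarmonic A ξ) (htop : ∀ i, ξ i ≠ ⊤)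
    {i₀ : S} (hi₀ : ξ i₀ ≠ ⊥) {ε : ℝ} (hε : 0 < ε) :
    ∃ x : ℕ → S, x 0 = i₀ ∧ ∀ k, ξ i₀ ≤ pathWeight A x k + ξ (x k) + ε := by
  obtain ⟨r, hr⟩ : ∃ r : ℝ, ξ i₀ = r := ⟨_, (EReal.coe_toReal (htop i₀) hi₀).symm⟩
  choose! next hnext using fun i (hi : ξ i ≠ ⊥) (δ : ℝ) (hδ : 0 < δ) =>
    hξ.exists_le_add hi (htop i) hδ
  let x : ℕ → S := fun k => Nat.rec i₀ (fun k y => next y (ε / 2 ^ (k + 1))) k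
  -- the `k`-th step loses at most `ε / 2 ^ (k + 1)`, so `ε / 2 ^ k` of the budget is left
  have hinv : ∀ k, ((r - ε + ε / 2 ^ k : ℝ) : EReal) ≤ pathWeight A x k + ξ (x k) := by
    intro k
    induction k with
    | zero => simp [pathWeight_zero, x, hr]
    | succ k ih =>
      have hbot : ξ (x k) ≠ ⊥ := fun h => by
        rw [h, EReal.add_bot, le_bot_iff] at ih
        exact EReal.coe_ne_bot _ ih
      have hstep := hnext (x k) hbot (ε / 2 ^ (k + 1)) (by positivity)
      refine (EReal.addLECancellable_coe (ε / 2 ^ (k + 1))).add_le_add_iff_right.1 ?_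
      calc ((r - ε + ε / 2 ^ (k + 1) : ℝ) : EReal) + (ε / 2 ^ (k + 1) : ℝ)
          = ((r - ε + ε / 2 ^ k : ℝ) : EReal) := by
            rw [← EReal.coe_add]; congr 1; field_simp; ring
        _ ≤ pathWeight A x k + ξ (x k) := ih
        _ ≤ pathWeight A x k
              + (A (x k) (x (k + 1)) + ξ (x (k + 1)) + (ε / 2 ^ (k + 1) : ℝ)) :=
            add_le_add le_rfl hstep
        _ = pathWeight A x (k + 1) + ξ (x (k + 1)) + (ε / 2 ^ (k + 1) : ℝ) := by
            simp only [pathWeight_succ, add_assoc]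
  refine ⟨x, rfl, fun k => ?_⟩
  have hk : r - ε ≤ r - ε + ε / 2 ^ k := le_add_of_nonneg_right (by positivity)
  calc ξ i₀ = ((r - ε : ℝ) : EReal) + ε := by rw [hr, ← EReal.coe_add, sub_add_cancel]
    _ ≤ pathWeight A x k + ξ (x k) + ε :=
        add_le_add ((EReal.coe_le_coe_iff.2 hk).trans (hinv k)) le_rfl

lemma isAlmostGeodesic_of_le_pathWeight_add {ξ : S → EReal} {x : ℕ → S} {M ε : ℝ}
    (hM : ∀ j, (π j : EReal) + ξ j ≤ M) (hε : 0 ≤ ε) (hx0 : ξ (x 0) ≠ ⊥)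
    (hx : ∀ k, ξ (x 0) ≤ pathWeight A x k + ξ (x k) + ε) : IsAlmostGeodesic A π x := by
  obtain ⟨r, hr⟩ : ∃ r : ℝ, ξ (x 0) = r :=
    ⟨_, (EReal.coe_toReal (fun h => by simpa [h] using hM (x 0)) hx0).symm⟩
  have hr0 : r + π (x 0) ≤ M := by
    have := hM (x 0)
    rw [hr, add_comm] at this
    exact_mod_cast this
  refine ⟨M + ε - r - π (x 0), by linarith, fun k => ?_⟩
  have hk := hx k
  have hMk := hM (x k)
  rw [hr] at hk
  rw [← EReal.coe_add]
  generalize pathWeight A x k = W at hk ⊢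
  generalize ξ (x k) = y at hk hMk
  induction W using EReal.rec with
  | bot => simp at hk
  | top => rw [EReal.add_top_of_ne_bot (EReal.coe_ne_bot _)]; exact le_top
  | coe W =>
    induction y using EReal.rec with
    | bot => simp at hk
    | top => simp at hMk
    | coe y => norm_cast at hk hMk ⊢; linarith

lemma IsAlmostGeodesic.pathWeight_ne_bot (hx : IsAlmostGeodesic A π x) (k : ℕ) :
    pathWeight A x k ≠ ⊥ := by
  obtain ⟨α, -, hα⟩ := hx
  intro h
  have := hα k
  rw [h, EReal.add_bot, le_bot_iff] at this
  exact EReal.coe_ne_bot _ this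

lemma LeftSuperharmonic.pathWeight_ne_top (hπ : LeftSuperharmonic A π) (x : ℕ → S) (k : ℕ) :
    pathWeight A x k ≠ ⊤ := by
  intro h
  have := hπ.add_pathWeight_le x k
  rw [h, EReal.add_top_of_ne_bot (EReal.coe_ne_bot _), top_le_iff] at this
  exact EReal.coe_ne_top _ this

-- junk value `0` where the weight is infinite, which never happens along an almost-geodesic
def realWeight (A : S → S → EReal) (x : ℕ → S) (k : ℕ) : ℝ := (pathWeight A x k).toReal

def geodesicGap (A : S → S → EReal) (π : S → ℝ) (x : ℕ → S) (k : ℕ) : ℝ :=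
  realWeight A x k - π (x k)

-- `K_{i x_k}` is the nondecreasing `A*_{i x_k} - W_k` plus the convergent `geodesicGap`
def geodesicLimit (A : S → S → EReal) (π : S → ℝ) (x : ℕ → S) : S → EReal :=
  fun i => (⨆ k, star A i (x k) - realWeight A x k)
    + ((⨅ k, geodesicGap A π x k : ℝ) : EReal)

lemma K_eq_add_geodesicGap (i : S) (k : ℕ) :
    K A π i (x k) = (star A i (x k) - realWeight A x k) + geodesicGap A π x k := by
  rw [K, geodesicGap, sub_eq_add_neg, sub_eq_add_neg, add_assoc, ← EReal.coe_neg,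
    ← EReal.coe_neg, ← EReal.coe_add]
  congr 2
  ring

lemma IsAlmostGeodesic.coe_realWeight (hπ : LeftSuperharmonic A π)
    (hx : IsAlmostGeodesic A π x) (k : ℕ) : (realWeight A x k : EReal) = pathWeight A x k :=
  EReal.coe_toReal (hπ.pathWeight_ne_top x k) (hx.pathWeight_ne_bot k)

lemma IsAlmostGeodesic.step_eq_realWeight_sub (hπ : LeftSuperharmonic A π)
    (hx : IsAlmostGeodesic A π x) (k : ℕ) :
    A (x k) (x (k + 1)) = ((realWeight A x (k + 1) - realWeight A x k : ℝ) : EReal) := by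
  have h := pathWeight_succ (A := A) x k
  rw [← hx.coe_realWeight hπ, ← hx.coe_realWeight hπ] at h
  generalize A (x k) (x (k + 1)) = a at h ⊢
  induction a using EReal.rec with
  | bot => simp at h
  | top => simp at h
  | coe a => norm_cast at h ⊢; linarith

lemma IsAlmostGeodesic.tendsto_geodesicGap (hπ : LeftSuperharmonic A π)
    (hx : IsAlmostGeodesic A π x) :
    Tendsto (geodesicGap A π x) atTop (𝓝 (⨅ k, geodesicGap A π x k)) := by
  refine tendsto_atTop_ciInf (antitone_nat_of_succ_le fun k => ?_) ?_
  · have h := hπ.add_le (x k) (x (k + 1))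
    rw [hx.step_eq_realWeight_sub hπ k, ← EReal.coe_add, EReal.coe_le_coe_iff] at h
    simp only [geodesicGap]
    linarith
  · obtain ⟨α, -, hα⟩ := id hx
    refine ⟨-α - π (x 0), Set.forall_mem_range.2 fun k => ?_⟩
    have h := hα k
    rw [← hx.coe_realWeight hπ, ← EReal.coe_add, ← EReal.coe_add, EReal.coe_le_coe_iff] at h
    simp only [geodesicGap]
    linarith

lemma IsAlmostGeodesic.monotone_star_sub_realWeight (hπ : LeftSuperharmonic A π)
    (hx : IsAlmostGeodesic A π x) (i : S) :
    Monotone fun k => star A i (x k) - realWeight A x k := by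
  refine monotone_nat_of_le_succ fun k => ?_
  have h := star_add_le_star (A := A) i (x k) (x (k + 1))
  rw [hx.step_eq_realWeight_sub hπ k] at h
  refine le_of_eq_of_le ?_ (EReal.sub_le_sub h le_rfl)
  rw [sub_eq_add_neg, sub_eq_add_neg, add_assoc, ← EReal.coe_neg, ← EReal.coe_neg,
    ← EReal.coe_add]
  congr 2
  ring

lemma IsAlmostGeodesic.tendsto_geodesicLimit (hπ : LeftSuperharmonic A π)
    (hx : IsAlmostGeodesic A π x) :
    Tendsto (fun k i => K A π i (x k)) atTop (𝓝 (geodesicLimit A π x)) := by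
  refine tendsto_pi_nhds.2 fun i => ?_
  simp_rw [K_eq_add_geodesicGap]
  exact (EReal.continuousAt_add (.inr (EReal.coe_ne_bot _)) (.inr (EReal.coe_ne_top _))).tendsto
    |>.comp ((tendsto_atTop_iSup (hx.monotone_star_sub_realWeight hπ i)).prodMk_nhds
      (EReal.tendsto_coe.2 (hx.tendsto_geodesicGap hπ)))

lemma IsAlmostGeodesic.geodesicLimit_mem_martin (hπ : LeftSuperharmonic A π)
    (hx : IsAlmostGeodesic A π x) : geodesicLimit A π x ∈ martin A π :=
  mem_closure_of_tendsto (hx.tendsto_geodesicLimit hπ)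
    (Eventually.of_forall fun k => ⟨x k, rfl⟩)

lemma coe_sub_le_geodesicLimit (k : ℕ) :
    (((⨅ m, geodesicGap A π x m) - realWeight A x k : ℝ) : EReal)
      ≤ geodesicLimit A π x (x k) := by
  calc (((⨅ m, geodesicGap A π x m) - realWeight A x k : ℝ) : EReal)
      = (0 - realWeight A x k) + ((⨅ m, geodesicGap A π x m : ℝ) : EReal) := by
        rw [zero_sub, ← EReal.coe_neg, ← EReal.coe_add, neg_add_eq_sub]
    _ ≤ (star A (x k) (x k) - realWeight A x k) + ((⨅ m, geodesicGap A π x m : ℝ) : EReal) :=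
        add_le_add (EReal.sub_le_sub (zero_le_star_self _) le_rfl) le_rfl
    _ ≤ geodesicLimit A π x (x k) :=
        add_le_add (le_iSup (fun m => star A (x k) (x m) - realWeight A x m) k) le_rfl

lemma IsAlmostGeodesic.geodesicLimit_mem_martinMin (hπ : LeftSuperharmonic A π)
    (hx : IsAlmostGeodesic A π x) : geodesicLimit A π x ∈ martinMin A π := by
  have hwM := hx.geodesicLimit_mem_martin hπ
  refine ⟨hwM, le_antisymm (hπ.Hflat_self_le_zero hwM) ?_⟩
  have hlow : ∀ k, (((⨅ m, geodesicGap A π x m) - geodesicGap A π x k : ℝ) : EReal)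
      ≤ π (x k) + flat A π (geodesicLimit A π x) (x k) := by
    intro k
    calc (((⨅ m, geodesicGap A π x m) - geodesicGap A π x k : ℝ) : EReal)
        = π (x k) + (A (x k) (x (k + 1))
          + (((⨅ m, geodesicGap A π x m) - realWeight A x (k + 1) : ℝ) : EReal)) := by
          rw [hx.step_eq_realWeight_sub hπ k, ← EReal.coe_add, ← EReal.coe_add, geodesicGap]
          congr 1
          ring
      _ ≤ π (x k) + (A (x k) (x (k + 1)) + geodesicLimit A π x (x (k + 1))) :=
          add_le_add le_rfl (add_le_add le_rfl (coe_sub_le_geodesicLimit (k + 1)))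
      _ ≤ π (x k) + flat A π (geodesicLimit A π x) (x k) :=
          add_le_add le_rfl (add_le_flat _ _ _)
  have htend : Tendsto
      (fun k => (((⨅ m, geodesicGap A π x m) - geodesicGap A π x k : ℝ) : EReal)) atTop (𝓝 0) := by
    have := (tendsto_const_nhds (x := ⨅ m, geodesicGap A π x m)).sub (hx.tendsto_geodesicGap hπ)
    rw [sub_self] at this
    simpa using EReal.tendsto_coe.2 this
  calc (0 : EReal)
      = limsup (fun k => (((⨅ m, geodesicGap A π x m) - geodesicGap A π x k : ℝ) : EReal))
          atTop :=
        htend.limsup_eq.symm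
    _ ≤ limsup (fun k => (π (x k) : EReal) + flat A π (geodesicLimit A π x) (x k)) atTop :=
        limsup_le_limsup (Eventually.of_forall hlow)
    _ ≤ limsup (fun j => (π j : EReal) + flat A π (geodesicLimit A π x) j)
          (martinFilter A π (geodesicLimit A π x)) :=
        (tendsto_martinFilter_iff.2 (hx.tendsto_geodesicLimit hπ)).limsup_comp_le_limsup
          (u := fun j => (π j : EReal) + flat A π (geodesicLimit A π x) j)
    _ = Hflat A π (geodesicLimit A π x) (geodesicLimit A π x) := (mu_eq_limsup _ _).symm

lemma LeftSuperharmonic.exists_mem_martinMin_le_add_mu (hπ : LeftSuperharmonic A π)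
    {ξ : S → EReal} (hξ : ξ ∈ Hset A π) {i : S} {c : ℝ} (hc : (c : EReal) < ξ i) :
    ∃ w ∈ martinMin A π, (c : EReal) ≤ w i + mu A π ξ w := by
  obtain ⟨r, hr⟩ : ∃ r : ℝ, ξ i = r := ⟨_, (EReal.coe_toReal (hξ.1 i) hc.ne_bot).symm⟩
  have hcr : c < r := EReal.coe_lt_coe_iff.1 (hr ▸ hc)
  obtain ⟨x, rfl, hx⟩ :=
    (isHarmonic_of_mem_Hset hξ).exists_path hξ.1 hc.ne_bot (sub_pos.2 hcr)
  obtain ⟨M, hsM, -⟩ := EReal.lt_iff_exists_real_btwn.1 hξ.2.2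
  have hgeo : IsAlmostGeodesic A π x := isAlmostGeodesic_of_le_pathWeight_add
    (fun j => (le_iSup (fun j => (π j : EReal) + ξ j) j).trans hsM.le) (sub_pos.2 hcr).le
    hc.ne_bot hx
  refine ⟨geodesicLimit A π x, hgeo.geodesicLimit_mem_martinMin hπ, ?_⟩
  have hk : ∀ k, (c : EReal) ≤ K A π (x 0) (x k) + ((π (x k) : EReal) + ξ (x k)) := by
    intro k
    refine (EReal.addLECancellable_coe (r - c)).add_le_add_iff_right.1 ?_
    calc (c : EReal) + (r - c : ℝ) = ξ (x 0) := by rw [hr, ← EReal.coe_add, add_sub_cancel]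
      _ ≤ pathWeight A x k + ξ (x k) + (r - c : ℝ) := hx k
      _ ≤ star A (x 0) (x k) + ξ (x k) + (r - c : ℝ) :=
          add_le_add (add_le_add (pathWeight_le_star x k) le_rfl) le_rfl
      _ = K A π (x 0) (x k) + ((π (x k) : EReal) + ξ (x k)) + (r - c : ℝ) := by
          rw [← K_add_pi, add_assoc (K A π (x 0) (x k))]
  calc (c : EReal)
      ≤ limsup (fun k => K A π (x 0) (x k) + ((π (x k) : EReal) + ξ (x k))) atTop :=
        le_limsup_of_frequently_le' (Frequently.of_forall hk)
    _ ≤ limsup (fun j => K A π (x 0) j + ((π j : EReal) + ξ j))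
          (martinFilter A π (geodesicLimit A π x)) :=
        (tendsto_martinFilter_iff.2 (hgeo.tendsto_geodesicLimit hπ)).limsup_comp_le_limsup
          (u := fun j => K A π (x 0) j + ((π j : EReal) + ξ j))
    _ ≤ _ := hπ.limsup_K_add_le (hgeo.geodesicLimit_mem_martin hπ) hξ.2.2.ne (x 0)

theorem LeftSuperharmonic.iSup_mu_add_eq (hπ : LeftSuperharmonic A π) {ξ : S → EReal}
    (hξ : ξ ∈ Hset A π) : ⨆ w : martinMin A π, (fun i => mu A π ξ w + w.1 i) = ξ := by
  funext i
  rw [iSup_apply]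
  refine le_antisymm
    (iSup_le fun w => (isHarmonic_of_mem_Hset hξ).isSuperharmonic.mu_add_le w.1 i) ?_
  refine EReal.ge_of_forall_gt_iff_ge.1 fun c hc => ?_
  obtain ⟨w, hw, hcw⟩ := hπ.exists_mem_martinMin_le_add_mu hξ hc
  exact hcw.trans (le_iSup_of_le ⟨w, hw⟩ (add_comm (w i) _).le)

lemma LeftSuperharmonic.biSup_mu_add_mem_Hset (hπ : LeftSuperharmonic A π) {ξ : S → EReal}
    (hξ : ξ ∈ Hset A π) (P : Set (martinMin A π)) :
    (⨆ w ∈ P, fun i => mu A π ξ w + w.1 i) ∈ Hset A π :=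
  mem_Hset_of_le (IsHarmonic.iSup fun w => IsHarmonic.iSup fun _ =>
      (isHarmonic_of_mem_martinMin w.2).const_add _) hξ
    ((iSup₂_le fun w _ => le_iSup (fun w : martinMin A π => fun i => mu A π ξ w + w.1 i) w).trans
      (hπ.iSup_mu_add_eq hξ).le)

lemma LeftSuperharmonic.mem_martinMin_of_extremalGen (hπ : LeftSuperharmonic A π)
    {ξ : S → EReal} (hext : ExtremalGen (Hset A π) ξ) (hnorm : Normalised π ξ) :
    ξ ∈ martinMin A π := by
  obtain ⟨hξ, hbot, hext⟩ := hext
  have hmu : ∀ w, mu A π ξ w ≤ 0 := fun w => (mu_le_iSup ξ w).trans hnorm.le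
  obtain ⟨y, hyM, hy⟩ := isCompact_martin.exists_mem_of_join_irreducible hbot
    (fun u hu v hv h => hext u v hu hv h) (hπ.biSup_mu_add_mem_Hset hξ) (hπ.iSup_mu_add_eq hξ)
    Subtype.val fun w => w.2.1
  -- the approximants that miss a constraint `C` cannot generate `ξ`, so `y` satisfies it
  have hle : ξ ≤ y := fun i => EReal.ge_of_forall_gt_iff_ge.1 fun c hc =>
    hy {z | (c : EReal) ≤ z i} (isClosed_le continuous_const (continuous_apply i)) fun h => by
      refine hc.not_ge (le_of_eq_of_le (congrFun h i).symm ?_)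
      simp only [iSup_apply]
      refine iSup₂_le fun w (hw : ¬ (c : EReal) ≤ w.1 i) => ?_
      exact ((add_le_add (hmu w) le_rfl).trans_eq (zero_add _)).trans (not_le.1 hw).le
  have hpos : 0 ≤ mu A π ξ y := EReal.ge_of_forall_gt_iff_ge.1 fun c hc =>
    hy {z | (c : EReal) ≤ mu A π ξ z} (isClosed_setOf_le_mu ξ c) fun h => by
      refine hc.not_ge (hnorm.symm.trans_le ?_)
      rw [← h]
      simp only [iSup_apply, EReal.add_iSup]
      refine iSup_le fun j => iSup₂_le fun w (hw : ¬ (c : EReal) ≤ mu A π ξ w) => ?_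
      rw [add_left_comm]
      exact (add_le_add (not_le.1 hw).le (hπ.add_le_zero_of_mem_martin w.2.1 j)).trans_eq
        (add_zero _)
  obtain rfl : y = ξ :=
    le_antisymm ((isHarmonic_of_mem_Hset hξ).isSuperharmonic.le_of_mu_nonneg hpos) hle
  refine ⟨hyM, le_antisymm (hπ.Hflat_self_le_zero hyM) ?_⟩
  rwa [Hflat, (isHarmonic_of_mem_Hset hξ).flat_eq hyM]

end MaxPlus

namespace MaxPlus

theorem extremalGen_Hset_iff_general {S : Type*} (A : S → S → EReal)
    (π : S → ℝ) (hπ : LeftSuperharmonic A π)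
    (ξ : S → EReal) :
    (ExtremalGen (Hset A π) ξ ∧ Normalised π ξ) ↔ ξ ∈ martinMin A π :=
  ⟨fun ⟨hext, hnorm⟩ => hπ.mem_martinMin_of_extremalGen hext hnorm,
    fun hξ => ⟨hπ.extremalGen_of_mem_martinMin hξ, hπ.normalised_of_mem_martinMin hξ⟩⟩

/-- a vector `ξ` is a normalised extremal generator of `ℋ` iff `ξ ∈ ℳᵐ`. -/
theorem extremalGen_Hset_iff {S : Type*} (A : S → S → EReal)
    (hA : ∀ i j, A i j ≠ ⊤) (π : S → ℝ) (hπ : LeftSuperharmonic A π)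
    (ξ : S → EReal) :
    (ExtremalGen (Hset A π) ξ ∧ Normalised π ξ) ↔ ξ ∈ martinMin A π :=
  extremalGen_Hset_iff_general A π hπ ξ

end MaxPlus
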